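/- Let q and g be independent standard Gaussian N(0,1) random variables and for s ∈ ℝ, r ≥ 0 set c_d(s,r) = E[(min{|q| − |r·g + s·q|, 0})²]. Then: (i) for every s ∈ ℝ and r > 0, c_d(s,r) = (1/π)·[ ((1−s)² + r²)·(π/2 − arctan((1−s)/r)) + ((1+s)² + r²)·(π/2 − arctan((1+s)/r)) − 2r ]; (ii) c_d(s,0) = (|s| − 1)² if |s| ≥ 1, and c_d(s,0) = 0 if |s| < 1. -/

import Mathlib

open MeasureTheory ProbabilityTheory Filter Real

noncomputable section

/-- The standard Gaussian measure `N(0,1)` on `ℝ`. -/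
def stdGaussian : Measure ℝ := gaussianReal 0 1

instance : IsProbabilityMeasure stdGaussian :=
  inferInstanceAs (IsProbabilityMeasure (gaussianReal 0 1))

/-- `c_d(s,r) = E[(min{|q| - |r g + s q|, 0})²]` for independent standard Gaussians `q, g`. -/
def cd (s r : ℝ) : ℝ :=
  ∫ p : ℝ × ℝ, (min (|p.1| - |r * p.2 + s * p.1|) 0) ^ 2
    ∂(stdGaussian.prod stdGaussian)

open Set Topology

/-! The integrand `h (q, g) = (min (|q| - |r g + s q|) 0)²` is homogeneous of degree two, so
in polar coordinates the Gaussian expectation becomes `(1/π) ∫_{-π}^{π} h (cos θ, sin θ) dθ`;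
by `π`-periodicity and the substitution `θ = arctan t` this is
`(2/π) ∫ h (1, t) / (1 + t²)² dt`. For `r > 0`, `h (1, t)` vanishes for
`-(1 + s)/r ≤ t ≤ (1 - s)/r` and equals `r² (t - c)²` beyond an endpoint `c` (after reflecting
`t ↦ -t`, `s ↦ -s` on the left), and `(t - c)² / (1 + t²)²` has an elementary primitive.
For `r = 0`, `h (q, g) = (min (1 - |s|) 0)² q²` and `E[q²] = 1`. -/

lemma integral_stdGaussian_prod_eq_integral_gaussian_mul (h : ℝ × ℝ → ℝ) :
    ∫ p, h p ∂(stdGaussian.prod stdGaussian) =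
      ∫ p : ℝ × ℝ, (2 * π)⁻¹ * rexp (-(p.1 ^ 2 + p.2 ^ 2) / 2) * h p := by
  rw [_root_.stdGaussian, gaussianReal_of_var_ne_zero 0 one_ne_zero,
    prod_withDensity (measurable_gaussianPDF 0 1) (measurable_gaussianPDF 0 1),
    integral_withDensity_eq_integral_toReal_smul (by fun_prop)
      (ae_of_all _ fun _ => ENNReal.mul_lt_top (by simp [gaussianPDF]) (by simp [gaussianPDF]))]
  congr 1 with p
  have hpdf := gaussianPDFReal_nonneg 0 1
  rw [gaussianPDF, gaussianPDF, ← ENNReal.ofReal_mul (hpdf _),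
    ENNReal.toReal_ofReal (mul_nonneg (hpdf _) (hpdf _)), smul_eq_mul]
  simp only [gaussianPDFReal, NNReal.coe_one, mul_one, sub_zero]
  rw [mul_mul_mul_comm, ← Real.exp_add, ← mul_inv, Real.mul_self_sqrt (by positivity)]
  ring_nf

lemma integral_Ioi_pow_three_mul_exp_neg_sq_div_two :
    ∫ x in Ioi (0 : ℝ), x ^ 3 * rexp (-x ^ 2 / 2) = 2 := by
  have h := integral_rpow_mul_exp_neg_mul_rpow (p := 2) (q := 3) (b := 1 / 2)
    (by norm_num) (by norm_num) (by norm_num)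
  norm_num at h
  refine Eq.trans ?_ h
  congr! 3 with x
  ring_nf

lemma integral_gaussian_mul_eq_integral_cos_sin (h : ℝ × ℝ → ℝ)
    (hh : ∀ c : ℝ, 0 ≤ c → ∀ p, h (c • p) = c ^ 2 * h p) :
    ∫ p : ℝ × ℝ, (2 * π)⁻¹ * rexp (-(p.1 ^ 2 + p.2 ^ 2) / 2) * h p =
      π⁻¹ * ∫ θ in Ioo (-π) π, h (cos θ, sin θ) := by
  rw [← integral_comp_polarCoord_symm]
  have hpolar : EqOn
      (fun p : ℝ × ℝ => p.1 • ((2 * π)⁻¹ * rexp (-((polarCoord.symm p).1 ^ 2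
        + (polarCoord.symm p).2 ^ 2) / 2) * h (polarCoord.symm p)))
      (fun p => (p.1 ^ 3 * rexp (-p.1 ^ 2 / 2)) * ((2 * π)⁻¹ * h (cos p.2, sin p.2)))
      polarCoord.target := by
    rintro ⟨ρ, θ⟩ ⟨hρ, -⟩
    have hsymm : polarCoord.symm (ρ, θ) = ρ • (cos θ, sin θ) := by
      simp [polarCoord_symm_apply]
    have hsq : (ρ * cos θ) ^ 2 + (ρ * sin θ) ^ 2 = ρ ^ 2 := by
      linear_combination ρ ^ 2 * sin_sq_add_cos_sq θ
    simp only [hsymm, hh ρ (le_of_lt hρ), Prod.smul_fst, Prod.smul_snd, smul_eq_mul, hsq]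
    ring
  rw [setIntegral_congr_fun polarCoord.open_target.measurableSet hpolar, polarCoord_target,
    Measure.volume_eq_prod, ← Measure.prod_restrict,
    integral_prod_mul (fun ρ => ρ ^ 3 * rexp (-ρ ^ 2 / 2))
      fun θ => (2 * π)⁻¹ * h (cos θ, sin θ),
    integral_Ioi_pow_three_mul_exp_neg_sq_div_two, integral_const_mul]
  ring

lemma integral_Ioo_neg_pi_pi_of_periodic {g : ℝ → ℝ} (hg : Continuous g)
    (hper : Function.Periodic g π) :
    ∫ θ in Ioo (-π) π, g θ = 2 * ∫ θ in Ioo (-(π / 2)) (π / 2), g θ := by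
  simp only [← integral_Ioc_eq_integral_Ioo,
    ← intervalIntegral.integral_of_le (by linarith [pi_pos] : -π ≤ π),
    ← intervalIntegral.integral_of_le (by linarith [pi_pos] : -(π / 2) ≤ π / 2)]
  have h := hper.intervalIntegral_add_zsmul_eq 2 (-π) hg.intervalIntegrable
  simp only [hper.intervalIntegral_add_eq (-π) (-(π / 2)), zsmul_eq_mul, Int.cast_ofNat] at h
  rw [show -π + 2 * π = π by ring, show -(π / 2) + π = π / 2 by ring] at h
  exact h

lemma integral_cos_sin_eq_integral_div_one_add_sq_sq (h : ℝ × ℝ → ℝ)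
    (hh : ∀ c : ℝ, 0 ≤ c → ∀ p, h (c • p) = c ^ 2 * h p) :
    ∫ θ in Ioo (-(π / 2)) (π / 2), h (cos θ, sin θ) = ∫ t, h (1, t) / (1 + t ^ 2) ^ 2 := by
  rw [← range_arctan, ← image_univ,
    integral_image_eq_integral_abs_deriv_smul MeasurableSet.univ
      (fun t _ => (hasDerivAt_arctan t).hasDerivWithinAt) arctan_injective.injOn,
    setIntegral_univ]
  congr 1 with t
  have hsqrt : 0 < √(1 + t ^ 2) := by positivity
  have hcs : (cos (arctan t), sin (arctan t)) = (√(1 + t ^ 2))⁻¹ • ((1 : ℝ), t) := by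
    rw [cos_arctan, sin_arctan, Prod.smul_mk, smul_eq_mul, smul_eq_mul, mul_one, one_div,
      div_eq_inv_mul]
  rw [hcs, hh _ (by positivity), inv_pow, sq_sqrt (by positivity), smul_eq_mul,
    abs_of_pos (by positivity)]
  field_simp

theorem integral_stdGaussian_prod_of_homogeneous (h : ℝ × ℝ → ℝ) (hc : Continuous h)
    (hh : ∀ (c : ℝ) p, h (c • p) = c ^ 2 * h p) :
    ∫ p, h p ∂(stdGaussian.prod stdGaussian) = 2 / π * ∫ t, h (1, t) / (1 + t ^ 2) ^ 2 := by
  have hper : Function.Periodic (fun θ => h (cos θ, sin θ)) π := fun θ => by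
    simpa [cos_add_pi, sin_add_pi] using hh (-1) (cos θ, sin θ)
  rw [integral_stdGaussian_prod_eq_integral_gaussian_mul,
    integral_gaussian_mul_eq_integral_cos_sin h fun c _ => hh c,
    integral_Ioo_neg_pi_pi_of_periodic (by fun_prop) hper,
    integral_cos_sin_eq_integral_div_one_add_sq_sq h fun c _ => hh c]
  ring

lemma min_mul_zero_of_nonneg {a c : ℝ} (hc : 0 ≤ c) : min (c * a) 0 = c * min a 0 := by
  rw [mul_min_of_nonneg _ _ hc, mul_zero]

def cdIntegrand (s r : ℝ) (p : ℝ × ℝ) : ℝ := (min (|p.1| - |r * p.2 + s * p.1|) 0) ^ 2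

lemma continuous_cdIntegrand (s r : ℝ) : Continuous (cdIntegrand s r) := by
  unfold cdIntegrand
  fun_prop

lemma cdIntegrand_smul (s r c : ℝ) (p : ℝ × ℝ) :
    cdIntegrand s r (c • p) = c ^ 2 * cdIntegrand s r p := by
  have hfactor : |c * p.1| - |r * (c * p.2) + s * (c * p.1)| =
      |c| * (|p.1| - |r * p.2 + s * p.1|) := by
    rw [show r * (c * p.2) + s * (c * p.1) = c * (r * p.2 + s * p.1) by ring, abs_mul, abs_mul]
    ring
  simp only [cdIntegrand, Prod.smul_fst, Prod.smul_snd, smul_eq_mul, hfactor,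
    min_mul_zero_of_nonneg (abs_nonneg c), mul_pow, sq_abs]

def tailPrimitive (c u : ℝ) : ℝ :=
  (1 + c ^ 2) / 2 * arctan u + ((c ^ 2 - 1) * u + 2 * c) / (2 * (1 + u ^ 2))

lemma hasDerivAt_tailPrimitive (c t : ℝ) :
    HasDerivAt (tailPrimitive c) ((t - c) ^ 2 / (1 + t ^ 2) ^ 2) t := by
  have hden : HasDerivAt (fun u : ℝ => 2 * (1 + u ^ 2)) (2 * (2 * t)) t := by
    simpa using ((hasDerivAt_pow 2 t).const_add 1).const_mul 2
  have hnum : HasDerivAt (fun u : ℝ => (c ^ 2 - 1) * u + 2 * c) (c ^ 2 - 1) t := by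
    simpa using ((hasDerivAt_id t).const_mul (c ^ 2 - 1)).add_const (2 * c)
  have h : HasDerivAt (tailPrimitive c) _ t :=
    ((hasDerivAt_arctan t).const_mul ((1 + c ^ 2) / 2)).add (hnum.div hden (by positivity))
  convert h using 1
  field_simp
  ring

lemma tendsto_tailPrimitive (c : ℝ) :
    Tendsto (tailPrimitive c) atTop (𝓝 ((1 + c ^ 2) / 2 * (π / 2))) := by
  -- `(u + u⁻¹)⁻¹ = u / (1 + u²)` for `u > 0`
  have hinv : Tendsto (fun u : ℝ => (u + u⁻¹)⁻¹) atTop (𝓝 0) :=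
    tendsto_inv_atTop_zero.comp (tendsto_id.atTop_add tendsto_inv_atTop_zero)
  have hinv_sq : Tendsto (fun u : ℝ => (1 + u ^ 2)⁻¹) atTop (𝓝 0) :=
    tendsto_inv_atTop_zero.comp
      (tendsto_atTop_add_const_left _ 1 (tendsto_pow_atTop two_ne_zero))
  have h :=
    ((tendsto_arctan_atTop.mono_right nhdsWithin_le_nhds).const_mul ((1 + c ^ 2) / 2)).add
      ((hinv.const_mul ((c ^ 2 - 1) / 2)).add (hinv_sq.const_mul c))
  rw [mul_zero, mul_zero, add_zero, add_zero] at h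
  refine h.congr' ?_
  filter_upwards [eventually_gt_atTop 0] with u hu
  simp only [tailPrimitive]
  field_simp
  ring

lemma integral_Ioi_sub_sq_div_one_add_sq_sq (c : ℝ) :
    ∫ t in Ioi c, (t - c) ^ 2 / (1 + t ^ 2) ^ 2 =
      (1 + c ^ 2) / 2 * (π / 2 - arctan c) - c / 2 := by
  rw [integral_Ioi_of_hasDerivAt_of_nonneg' (fun t _ => hasDerivAt_tailPrimitive c t)
    (fun t _ => by positivity) (tendsto_tailPrimitive c), tailPrimitive]
  field_simp
  ring

def tanIntegrand (s r t : ℝ) : ℝ := (min (1 - |r * t + s|) 0) ^ 2 / (1 + t ^ 2) ^ 2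

lemma cd_eq_integral_tanIntegrand (s r : ℝ) : cd s r = 2 / π * ∫ t, tanIntegrand s r t := by
  rw [show cd s r = ∫ p, cdIntegrand s r p ∂(stdGaussian.prod stdGaussian) from rfl,
    integral_stdGaussian_prod_of_homogeneous _ (continuous_cdIntegrand s r) (cdIntegrand_smul s r)]
  simp [cdIntegrand, tanIntegrand]

lemma tanIntegrand_neg (s r t : ℝ) : tanIntegrand s r (-t) = tanIntegrand (-s) r t := by
  rw [tanIntegrand, tanIntegrand, show r * -t + s = -(r * t + -s) by ring, abs_neg, neg_sq]

lemma tanIntegrand_le (s r t : ℝ) :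
    tanIntegrand s r t ≤ 2 * (r ^ 2 + s ^ 2) * (1 + t ^ 2)⁻¹ := by
  have hmin : (min (1 - |r * t + s|) 0) ^ 2 ≤ |r * t + s| ^ 2 :=
    sq_le_sq' (le_min (by linarith) (by linarith [abs_nonneg (r * t + s)]))
      ((min_le_right _ _).trans (abs_nonneg _))
  calc tanIntegrand s r t ≤ (r * t + s) ^ 2 / (1 + t ^ 2) ^ 2 := by
        rw [tanIntegrand, ← sq_abs (r * t + s)]
        gcongr
    _ ≤ 2 * (r ^ 2 + s ^ 2) * (1 + t ^ 2) / (1 + t ^ 2) ^ 2 := by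
        gcongr
        nlinarith [sq_nonneg (r * t - s), sq_nonneg (s * t)]
    _ = 2 * (r ^ 2 + s ^ 2) * (1 + t ^ 2)⁻¹ := by
        field_simp

lemma integrable_tanIntegrand (s r : ℝ) : Integrable (tanIntegrand s r) := by
  refine (integrable_inv_one_add_sq.const_mul (2 * (r ^ 2 + s ^ 2))).mono'
    ((Continuous.div (by fun_prop) (by fun_prop) fun t => by positivity).aestronglyMeasurable)
    (ae_of_all _ fun t => ?_)
  rw [Real.norm_of_nonneg (by unfold tanIntegrand; positivity)]
  exact tanIntegrand_le s r t

lemma tanIntegrand_eq_zero {s r t : ℝ} (ht : |r * t + s| ≤ 1) : tanIntegrand s r t = 0 := by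
  rw [tanIntegrand, min_eq_right (by linarith), zero_pow two_ne_zero, zero_div]

lemma integral_Ioi_tanIntegrand (s : ℝ) {r : ℝ} (hr : 0 < r) :
    ∫ t in Ioi ((1 - s) / r), tanIntegrand s r t =
      ((1 - s) ^ 2 + r ^ 2) / 2 * (π / 2 - arctan ((1 - s) / r)) - r * (1 - s) / 2 := by
  have htail : EqOn (tanIntegrand s r)
      (fun t => r ^ 2 * ((t - (1 - s) / r) ^ 2 / (1 + t ^ 2) ^ 2)) (Ioi ((1 - s) / r)) :=
    fun t ht => by
    have hlt : 1 < r * t + s := by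
      have := (div_lt_iff₀' hr).mp (mem_Ioi.mp ht)
      linarith
    rw [tanIntegrand, abs_of_pos (by linarith), min_eq_left (by linarith)]
    field_simp
    ring
  rw [setIntegral_congr_fun measurableSet_Ioi htail, integral_const_mul,
    integral_Ioi_sub_sq_div_one_add_sq_sq]
  field_simp
  ring

lemma integral_tanIntegrand (s : ℝ) {r : ℝ} (hr : 0 < r) :
    ∫ t, tanIntegrand s r t =
      ((1 - s) ^ 2 + r ^ 2) / 2 * (π / 2 - arctan ((1 - s) / r))
        + ((1 + s) ^ 2 + r ^ 2) / 2 * (π / 2 - arctan ((1 + s) / r)) - r := by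
  have hint := integrable_tanIntegrand s r
  have hleft : ∫ t in Iic (-((1 + s) / r)), tanIntegrand s r t =
      ∫ t in Ioi ((1 - -s) / r), tanIntegrand (-s) r t := by
    have h := integral_comp_neg_Iic (-((1 + s) / r)) (tanIntegrand (-s) r)
    simp only [tanIntegrand_neg, neg_neg] at h
    rw [h, sub_neg_eq_add]
  have hmiddle : ∀ t ∈ Ioi (-((1 + s) / r)) \ Ioi ((1 - s) / r), tanIntegrand s r t = 0 := by
    rintro t ⟨hlo, hhi⟩
    have hlo' := (lt_div_iff₀ hr).mp (neg_lt.mp (mem_Ioi.mp hlo))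
    have hhi' := (le_div_iff₀ hr).mp (not_lt.mp hhi)
    exact tanIntegrand_eq_zero (abs_le.mpr ⟨by linarith, by linarith⟩)
  rw [← intervalIntegral.integral_Iic_add_Ioi hint.integrableOn hint.integrableOn,
    setIntegral_eq_of_subset_of_forall_sdiff_eq_zero measurableSet_Ioi
      (Ioi_subset_Ioi (by rw [← neg_div, div_le_div_iff_of_pos_right hr]; linarith)) hmiddle,
    hleft, integral_Ioi_tanIntegrand s hr, integral_Ioi_tanIntegrand (-s) hr, sub_neg_eq_add]
  ring

lemma integral_sq_stdGaussian : ∫ x, x ^ 2 ∂stdGaussian = 1 := by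
  have h := variance_of_integral_eq_zero (X := id) (μ := gaussianReal 0 1) aemeasurable_id
    integral_id_gaussianReal
  rw [variance_id_gaussianReal] at h
  exact_mod_cast h.symm

lemma cd_zero (s : ℝ) : cd s 0 = (min (1 - |s|) 0) ^ 2 := by
  have hfactor (p : ℝ × ℝ) :
      (min (|p.1| - |0 * p.2 + s * p.1|) 0) ^ 2 = (min (1 - |s|) 0) ^ 2 * p.1 ^ 2 := by
    rw [zero_mul, zero_add, abs_mul, show |p.1| - |s| * |p.1| = |p.1| * (1 - |s|) by ring,
      min_mul_zero_of_nonneg (abs_nonneg _), mul_pow, sq_abs, mul_comm]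
  simp only [cd, hfactor]
  rw [integral_fun_fst (fun x => (min (1 - |s|) 0) ^ 2 * x ^ 2), integral_const_mul,
    integral_sq_stdGaussian]
  simp

/-- **Closed form of `c_d`.** (i) For `r > 0`,
`c_d(s,r) = (1/π)[((1-s)² + r²)(π/2 - arctan((1-s)/r))
           + ((1+s)² + r²)(π/2 - arctan((1+s)/r)) - 2r]`;
(ii) `c_d(s,0) = (|s| - 1)²` if `|s| ≥ 1` and `c_d(s,0) = 0` if `|s| < 1`. -/
theorem stmt19 :
    (∀ s r : ℝ, 0 < r →
      cd s r = (1 / π) *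
        (((1 - s) ^ 2 + r ^ 2) * (π / 2 - Real.arctan ((1 - s) / r))
          + ((1 + s) ^ 2 + r ^ 2) * (π / 2 - Real.arctan ((1 + s) / r)) - 2 * r)) ∧
    (∀ s : ℝ, (1 ≤ |s| → cd s 0 = (|s| - 1) ^ 2) ∧ (|s| < 1 → cd s 0 = 0)) := by
  refine ⟨fun s r hr => ?_, fun s => ⟨fun hs => ?_, fun hs => ?_⟩⟩
  · rw [cd_eq_integral_tanIntegrand, integral_tanIntegrand s hr]
    ring
  · rw [cd_zero, min_eq_left (by linarith)]
    ring
  · rw [cd_zero, min_eq_right (by linarith)]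
    ring
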